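/- arXiv:1703.05094 — 2 statements merged into one kernel-verified Lean document; each statement's English description precedes it below -/
import Mathlib

section
/- Let π : (a,b) → ℝ be continuous with π(x) < 0 for x < x₀, π(x₀) = 0, π(x) > 0 for x > x₀, and π nondecreasing on (x₀,b). Let ψ be positive, increasing, twice continuously differentiable, r-harmonic (so that (ψ'/S')'(x) = rψ(x)m'(x)), with S', m' the scale and speed densities. Suppose y* > x₀ satisfies ∫_a^{y*} ψ(t)π(t)m'(t)dt = 0. Then the function f̂(x) = (S'(x)/ψ'(x)) ∫_a^x ψ(t)π(t)m'(t)dt is non-decreasing on (y*,b). -/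
open Set

/-!
With `h = ψ'/S'` and `g = ψ m' ≥ 0`, harmonicity and the definition of `F` read `h' = r g` and
`F' = g π`, so `f̂ = F / h` has derivative `g (π h - r F) / h²`. On `[y*, x]` the monotonicity of `π`
gives `(π(x) h - r F)' = r g (π(x) - π) ≥ 0`; since `F(y*) = 0` this yields
`r F(x) ≤ π(x) (h(x) - h(y*)) ≤ π(x) h(x)`, i.e. the derivative of `f̂` is nonnegative.
-/

theorem Convex.monotoneOn_of_hasDerivAt_nonneg {D : Set ℝ} (hD : Convex ℝ D) {f f' : ℝ → ℝ}
    (hf : ∀ x ∈ D, HasDerivAt f (f' x) x) (hf' : ∀ x ∈ D, 0 ≤ f' x) : MonotoneOn f D :=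
  monotoneOn_of_hasDerivWithinAt_nonneg hD
    (fun x hx => (hf x hx).continuousAt.continuousWithinAt)
    (fun x hx => (hf x (interior_subset hx)).hasDerivWithinAt)
    (fun x hx => hf' x (interior_subset hx))

section

variable {h F g π : ℝ → ℝ} {r : ℝ}

theorem mul_sub_le_mul_sub_of_hasDerivAt {y x : ℝ} (hyx : y ≤ x) (hr : 0 ≤ r)
    (hh : ∀ t ∈ Icc y x, HasDerivAt h (r * g t) t)
    (hF : ∀ t ∈ Icc y x, HasDerivAt F (g t * π t) t)
    (hg : ∀ t ∈ Icc y x, 0 ≤ g t) (hπ : ∀ t ∈ Icc y x, π t ≤ π x) :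
    r * (F x - F y) ≤ π x * (h x - h y) := by
  have hmono : MonotoneOn (fun t => π x * h t - r * F t) (Icc y x) := by
    refine (convex_Icc y x).monotoneOn_of_hasDerivAt_nonneg
      (fun t ht => ((hh t ht).const_mul (π x)).sub ((hF t ht).const_mul r)) fun t ht => ?_
    have : π x * (r * g t) - r * (g t * π t) = r * g t * (π x - π t) := by ring
    rw [this]
    exact mul_nonneg (mul_nonneg hr (hg t ht)) (sub_nonneg.mpr (hπ t ht))
  have := hmono (left_mem_Icc.mpr hyx) (right_mem_Icc.mpr hyx) hyx
  linarith

theorem monotoneOn_inv_mul_of_hasDerivAt {s : Set ℝ} (hs : Convex ℝ s)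
    (hh : ∀ x ∈ s, HasDerivAt h (r * g x) x) (hF : ∀ x ∈ s, HasDerivAt F (g x * π x) x)
    (hpos : ∀ x ∈ s, 0 < h x) (hg : ∀ x ∈ s, 0 ≤ g x)
    (hle : ∀ x ∈ s, r * F x ≤ π x * h x) :
    MonotoneOn (fun x => (h x)⁻¹ * F x) s := by
  refine hs.monotoneOn_of_hasDerivAt_nonneg
    (fun x hx => ((hh x hx).inv (hpos x hx).ne').mul (hF x hx)) fun x hx => ?_
  have hx0 := (hpos x hx).ne'
  have : -(r * g x) / h x ^ 2 * F x + (h x)⁻¹ * (g x * π x)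
      = g x * (π x * h x - r * F x) / h x ^ 2 := by
    field_simp
    ring
  rw [Pi.inv_apply, this]
  exact div_nonneg (mul_nonneg (hg x hx) (sub_nonneg.mpr (hle x hx))) (sq_nonneg _)

theorem monotoneOn_inv_mul_of_eq_zero_of_monotoneOn {y c : ℝ} (hr : 0 ≤ r)
    (hh : ∀ x ∈ Ico y c, HasDerivAt h (r * g x) x) (hF : ∀ x ∈ Ico y c, HasDerivAt F (g x * π x) x)
    (hpos : ∀ x ∈ Ico y c, 0 < h x) (hg : ∀ x ∈ Ico y c, 0 ≤ g x)
    (hπ : MonotoneOn π (Ico y c)) (hπ₀ : ∀ x ∈ Ioo y c, 0 ≤ π x) (hFy : F y = 0) :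
    MonotoneOn (fun x => (h x)⁻¹ * F x) (Ioo y c) := by
  have hIoo : Ioo y c ⊆ Ico y c := Ioo_subset_Ico_self
  refine monotoneOn_inv_mul_of_hasDerivAt (convex_Ioo y c) (fun x hx => hh x (hIoo hx))
    (fun x hx => hF x (hIoo hx)) (fun x hx => hpos x (hIoo hx)) (fun x hx => hg x (hIoo hx))
    fun x hx => ?_
  have hIcc : Icc y x ⊆ Ico y c := Icc_subset_Ico_right hx.2
  have hcomp := mul_sub_le_mul_sub_of_hasDerivAt hx.1.le hr (fun t ht => hh t (hIcc ht))
    (fun t ht => hF t (hIcc ht)) (fun t ht => hg t (hIcc ht))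
    (fun t ht => hπ (hIcc ht) (hIoo hx) ht.2)
  have hhy := hpos y (left_mem_Ico.mpr (hx.1.trans hx.2))
  have hπx := hπ₀ x hx
  rw [hFy, sub_zero] at hcomp
  nlinarith

end

theorem optimal_entry_repFun_monotone_general
    (a b r x₀ ystar : ℝ) (σ S' m' ψ ψ' π F : ℝ → ℝ)
    (hr : 0 < r) (hx₀ : x₀ ∈ Ioo a b) (hystar : ystar ∈ Ioo x₀ b)
    (hS'pos : ∀ x ∈ Ioo a b, 0 < S' x)
    (hm' : ∀ x ∈ Ioo a b, m' x = 2 / (σ x ^ 2 * S' x))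
    (hψpos : ∀ x ∈ Ioo a b, 0 < ψ x)
    (hψ'pos : ∀ x ∈ Ioo a b, 0 < ψ' x)
    (hharm : ∀ x ∈ Ioo a b,
      HasDerivAt (fun y => ψ' y / S' y) (r * ψ x * m' x) x)
    (hπpos : ∀ x ∈ Ioo x₀ b, 0 < π x)
    (hπmono : MonotoneOn π (Ioo x₀ b))
    -- `F(x) = ∫_a^x ψ(t) π(t) m'(t) dt`:
    (hF : ∀ x ∈ Ioo a b, HasDerivAt F (ψ x * π x * m' x) x)
    (hFystar : F ystar = 0) :
    MonotoneOn (fun x => S' x / ψ' x * F x) (Ioo ystar b) := by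
  have hI : Ico ystar b ⊆ Ioo a b := Ico_subset_Ioo_left (hx₀.1.trans hystar.1)
  have hI₀ : Ico ystar b ⊆ Ioo x₀ b := Ico_subset_Ioo_left hystar.1
  rw [show (fun x => S' x / ψ' x * F x) = fun x => (ψ' x / S' x)⁻¹ * F x by simp only [inv_div]]
  refine monotoneOn_inv_mul_of_eq_zero_of_monotoneOn hr.le
    (fun t ht => (hharm t (hI ht)).congr_deriv (mul_assoc _ _ _))
    (fun t ht => (hF t (hI ht)).congr_deriv (mul_right_comm _ _ _))
    (fun t ht => div_pos (hψ'pos t (hI ht)) (hS'pos t (hI ht)))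
    (fun t ht => mul_nonneg (hψpos t (hI ht)).le ?_) (hπmono.mono hI₀)
    (fun t ht => (hπpos t (hI₀ (Ioo_subset_Ico_self ht))).le) hFystar
  rw [hm' t (hI ht)]
  have := hS'pos t (hI ht)
  positivity

/-- optimal entry: with `π` nondecreasing on `(x₀,b)` and
`∫_a^{y*} ψ π m' = 0`, the representing function
`f̂(x) = (S'(x)/ψ'(x)) ∫_a^x ψ π m'` is non-decreasing on `(y*,b)`. -/
theorem optimal_entry_repFun_monotone
    (a b r x₀ ystar : ℝ) (μ σ S' m' ψ ψ' ψ'' π F : ℝ → ℝ)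
    (hr : 0 < r) (hx₀ : x₀ ∈ Ioo a b) (hystar : ystar ∈ Ioo x₀ b)
    (hσpos : ∀ x ∈ Ioo a b, 0 < σ x)
    (hS'pos : ∀ x ∈ Ioo a b, 0 < S' x)
    (hS' : ∀ x ∈ Ioo a b, HasDerivAt S' (-(2 * μ x / σ x ^ 2) * S' x) x)
    (hm' : ∀ x ∈ Ioo a b, m' x = 2 / (σ x ^ 2 * S' x))
    (hψpos : ∀ x ∈ Ioo a b, 0 < ψ x)
    (hψ : ∀ x ∈ Ioo a b, HasDerivAt ψ (ψ' x) x)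
    (hψ'pos : ∀ x ∈ Ioo a b, 0 < ψ' x)
    (hψ' : ∀ x ∈ Ioo a b, HasDerivAt ψ' (ψ'' x) x)
    (hψ''c : ContinuousOn ψ'' (Ioo a b))
    (hharm : ∀ x ∈ Ioo a b,
      HasDerivAt (fun y => ψ' y / S' y) (r * ψ x * m' x) x)
    (hπc : ContinuousOn π (Ioo a b))
    (hπneg : ∀ x ∈ Ioo a x₀, π x < 0)
    (hπ0 : π x₀ = 0)
    (hπpos : ∀ x ∈ Ioo x₀ b, 0 < π x)
    (hπmono : MonotoneOn π (Ioo x₀ b))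
    -- `F(x) = ∫_a^x ψ(t) π(t) m'(t) dt`:
    (hF : ∀ x ∈ Ioo a b, HasDerivAt F (ψ x * π x * m' x) x)
    (hFystar : F ystar = 0) :
    MonotoneOn (fun x => S' x / ψ' x * F x) (Ioo ystar b) :=
  optimal_entry_repFun_monotone_general a b r x₀ ystar σ S' m' ψ ψ' π F hr hx₀ hystar hS'pos hm'
    hψpos hψ'pos hharm hπpos hπmono hF hFystar
end

section
/- Let ψ be a positive, increasing, twice continuously differentiable r-harmonic function on (a,b) with scale density S' and speed density m', and let g be twice continuously differentiable with (G_r g) ∈ C ∩ L¹ and lim_{x↓a}(L_ψ g)(x) = 0. Then for all x ∈ (a,b), f̂(x) := g(x) - ψ(x)g'(x)/ψ'(x) = -(S'(x)/ψ'(x)) ∫_a^x (G_r g)(v) ψ(v) m'(v) dv. -/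
open Set Filter MeasureTheory Topology

/-!
The scaled Wronskian `(L_ψ g) = (g ψ' - g' ψ) / S'` satisfies
`(L_ψ g)' = -(G_r g) ψ m'`: the `μ`-terms coming from `S'' = -(2μ/σ²) S'` cancel those of
`g ψ'' - g'' ψ`, and the harmonicity `G_r ψ = 0` leaves only `(G_r g) ψ`. Integrating from `a+`,
where `L_ψ g` vanishes, gives `L_ψ g`, and `f̂ = (S'/ψ') L_ψ g`.
-/

/-- The operator `L_ψ`. -/
noncomputable def scaledWronskian (S' ψ ψ' g g' : ℝ → ℝ) (x : ℝ) : ℝ :=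
  (g x * ψ' x - g' x * ψ x) / S' x

theorem hasDerivAt_scaledWronskian {r t : ℝ} {μ σ S' m' ψ ψ' ψ'' g g' g'' Gg : ℝ → ℝ}
    (hσ : σ t ≠ 0) (hS'ne : S' t ≠ 0)
    (hS' : HasDerivAt S' (-(2 * μ t / σ t ^ 2) * S' t) t)
    (hm' : m' t = 2 / (σ t ^ 2 * S' t))
    (hψ : HasDerivAt ψ (ψ' t) t) (hψ' : HasDerivAt ψ' (ψ'' t) t)
    (hψharm : (1 / 2) * σ t ^ 2 * ψ'' t + μ t * ψ' t - r * ψ t = 0)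
    (hg : HasDerivAt g (g' t) t) (hg' : HasDerivAt g' (g'' t) t)
    (hGg : Gg t = (1 / 2) * σ t ^ 2 * g'' t + μ t * g' t - r * g t) :
    HasDerivAt (scaledWronskian S' ψ ψ' g g') (-(Gg t * ψ t * m' t)) t := by
  have hW : HasDerivAt (fun t => g t * ψ' t - g' t * ψ t)
      ((g' t * ψ' t + g t * ψ'' t) - (g'' t * ψ t + g' t * ψ' t)) t :=
    (hg.mul hψ').sub (hg'.mul hψ)
  refine (hW.div hS' hS'ne).congr_deriv ?_
  have hψ'' : ψ'' t = (r * ψ t - μ t * ψ' t) * 2 / σ t ^ 2 := by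
    field_simp
    linarith
  have hg'' : g'' t = (Gg t + r * g t - μ t * g' t) * 2 / σ t ^ 2 := by
    field_simp
    linarith
  rw [hm', hψ'', hg'']
  field_simp
  ring

theorem eq_sub_setIntegral_Ioo_of_hasDerivAt_of_tendsto {E : Type*} [NormedAddCommGroup E]
    [NormedSpace ℝ E] [CompleteSpace E] {L F : ℝ → E} {a x : ℝ} {ℓ : E} (hax : a < x)
    (hL : ∀ t ∈ Ioc a x, HasDerivAt L (-F t) t) (hF : IntegrableOn F (Ioo a x))
    (hℓ : Tendsto L (𝓝[>] a) (𝓝 ℓ)) :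
    L x = ℓ - ∫ v in Ioo a x, F v := by
  have hFTC := intervalIntegral.integral_eq_sub_of_hasDerivAt_of_tendsto hax
    (fun t ht => hL t (Ioo_subset_Ioc_self ht))
    ((intervalIntegrable_iff_integrableOn_Ioo_of_le hax.le).2 hF.neg) hℓ
    ((hL x ⟨hax, le_rfl⟩).continuousAt.tendsto.mono_left nhdsWithin_le_nhds)
  rw [intervalIntegral.integral_of_le hax.le, integral_Ioc_eq_integral_Ioo, integral_neg] at hFTC
  rw [sub_eq_add_neg, hFTC]
  abel

theorem sub_mul_div_eq_div_mul_scaledWronskian {S' ψ ψ' g g' : ℝ → ℝ} {x : ℝ}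
    (hS' : S' x ≠ 0) (hψ' : ψ' x ≠ 0) :
    g x - ψ x * g' x / ψ' x = S' x / ψ' x * scaledWronskian S' ψ ψ' g g' x := by
  unfold scaledWronskian
  field_simp

theorem repFun_integral_representation_general
    (a b r : ℝ) (μ σ S' m' ψ ψ' ψ'' g g' g'' : ℝ → ℝ)
    (hσpos : ∀ x ∈ Ioo a b, 0 < σ x)
    (hS'pos : ∀ x ∈ Ioo a b, 0 < S' x)
    (hS' : ∀ x ∈ Ioo a b, HasDerivAt S' (-(2 * μ x / σ x ^ 2) * S' x) x)
    (hm' : ∀ x ∈ Ioo a b, m' x = 2 / (σ x ^ 2 * S' x))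
    (hψ : ∀ x ∈ Ioo a b, HasDerivAt ψ (ψ' x) x)
    (hψ'pos : ∀ x ∈ Ioo a b, 0 < ψ' x)
    (hψ' : ∀ x ∈ Ioo a b, HasDerivAt ψ' (ψ'' x) x)
    (hψharm : ∀ x ∈ Ioo a b,
      (1 / 2) * σ x ^ 2 * ψ'' x + μ x * ψ' x - r * ψ x = 0)
    (hg : ∀ x ∈ Ioo a b, HasDerivAt g (g' x) x)
    (hg' : ∀ x ∈ Ioo a b, HasDerivAt g' (g'' x) x)
    (Gg : ℝ → ℝ)
    (hGg : ∀ x ∈ Ioo a b,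
      Gg x = (1 / 2) * σ x ^ 2 * g'' x + μ x * g' x - r * g x)
    (hGgint : IntegrableOn (fun v => Gg v * ψ v * m' v) (Ioo a b))
    (hLlim : Tendsto (fun x => (g x * ψ' x - g' x * ψ x) / S' x)
      (nhdsWithin a (Ioi a)) (nhds 0)) :
    ∀ x ∈ Ioo a b,
      g x - ψ x * g' x / ψ' x =
        -(S' x / ψ' x) * ∫ v in Ioo a x, Gg v * ψ v * m' v := by
  intro x hx
  have hsub : Ioc a x ⊆ Ioo a b := fun t ht => ⟨ht.1, ht.2.trans_lt hx.2⟩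
  have hL : scaledWronskian S' ψ ψ' g g' x = 0 - ∫ v in Ioo a x, Gg v * ψ v * m' v :=
    eq_sub_setIntegral_Ioo_of_hasDerivAt_of_tendsto hx.1
      (fun t ht => hasDerivAt_scaledWronskian (hσpos t (hsub ht)).ne' (hS'pos t (hsub ht)).ne'
        (hS' t (hsub ht)) (hm' t (hsub ht)) (hψ t (hsub ht)) (hψ' t (hsub ht))
        (hψharm t (hsub ht)) (hg t (hsub ht)) (hg' t (hsub ht)) (hGg t (hsub ht)))
      (hGgint.mono_set (Ioo_subset_Ioo_right hx.2.le)) hLlim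
  rw [sub_mul_div_eq_div_mul_scaledWronskian (hS'pos x hx).ne' (hψ'pos x hx).ne', hL]
  ring

/-- the integral representation
`f̂(x) = -(S'(x)/ψ'(x)) ∫_a^x (G_r g)(v) ψ(v) m'(v) dv`
when `(L_ψ g)(a+) = 0`. -/
theorem repFun_integral_representation
    (a b r : ℝ) (μ σ S' m' ψ ψ' ψ'' g g' g'' : ℝ → ℝ)
    (hr : 0 < r)
    (hσpos : ∀ x ∈ Ioo a b, 0 < σ x)
    (hμc : ContinuousOn μ (Ioo a b)) (hσc : ContinuousOn σ (Ioo a b))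
    (hS'pos : ∀ x ∈ Ioo a b, 0 < S' x)
    (hS' : ∀ x ∈ Ioo a b, HasDerivAt S' (-(2 * μ x / σ x ^ 2) * S' x) x)
    (hm' : ∀ x ∈ Ioo a b, m' x = 2 / (σ x ^ 2 * S' x))
    (hψpos : ∀ x ∈ Ioo a b, 0 < ψ x)
    (hψ : ∀ x ∈ Ioo a b, HasDerivAt ψ (ψ' x) x)
    (hψ'pos : ∀ x ∈ Ioo a b, 0 < ψ' x)
    (hψ' : ∀ x ∈ Ioo a b, HasDerivAt ψ' (ψ'' x) x)
    (hψharm : ∀ x ∈ Ioo a b,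
      (1 / 2) * σ x ^ 2 * ψ'' x + μ x * ψ' x - r * ψ x = 0)
    (hg : ∀ x ∈ Ioo a b, HasDerivAt g (g' x) x)
    (hg' : ∀ x ∈ Ioo a b, HasDerivAt g' (g'' x) x)
    (Gg : ℝ → ℝ)
    (hGg : ∀ x ∈ Ioo a b,
      Gg x = (1 / 2) * σ x ^ 2 * g'' x + μ x * g' x - r * g x)
    (hGgc : ContinuousOn Gg (Ioo a b))
    (hGgint : IntegrableOn (fun v => Gg v * ψ v * m' v) (Ioo a b))
    (hLlim : Tendsto (fun x => (g x * ψ' x - g' x * ψ x) / S' x)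
      (nhdsWithin a (Ioi a)) (nhds 0)) :
    ∀ x ∈ Ioo a b,
      g x - ψ x * g' x / ψ' x =
        -(S' x / ψ' x) * ∫ v in Ioo a x, Gg v * ψ v * m' v :=
  repFun_integral_representation_general a b r μ σ S' m' ψ ψ' ψ'' g g' g'' hσpos hS'pos hS' hm' hψ
    hψ'pos hψ' hψharm hg hg' Gg hGg hGgint hLlim
end
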